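/- Let (C,E,s) be an n-exangulated category and X an additive subcategory such that every object A of C admits a chosen distinguished n-exangle A --f_0^A--> X_1^A → ⋯ → X_n^A → GA ⇢ in which f_0^A is a left X-approximation of A and X_1^A, …, X_n^A ∈ X. Then there is a well-defined additive endofunctor G of the quotient category C/X which sends an object A to GA and a morphism ā : A → B to φ̄_{n+1}, where (a, φ_1, …, φ_n, φ_{n+1}) is any morphism of distinguished n-exangles from the chosen n-exangle for A to the chosen n-exangle for B lifting a; in particular φ̄_{n+1} depends neither on the chosen lift nor on the chosen representative a of ā. -/

import Mathlib

open CategoryTheory CategoryTheory.Limits Opposite ZeroObject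

universe v u

/-- A sequence of composable morphisms in `C`, indexed by `ℕ`.
For a complex of length `n+2` we only use the objects `0,…,n+1` and maps `0,…,n`. -/
structure ExSeq (C : Type u) [Category.{v} C] : Type max u v where
  obj : ℕ → C
  map : ∀ i : ℕ, obj i ⟶ obj (i + 1)

/-- A morphism of sequences, where only the components `0,…,n+1` (and the
commutativity of the squares involving the maps `0,…,n`) are relevant. -/
structure ExSeqHom {C : Type u} [Category.{v} C] (n : ℕ) (X Y : ExSeq C) :
    Type max u v where
  hom : ∀ i, X.obj i ⟶ Y.obj i
  comm : ∀ i, i ≤ n → X.map i ≫ hom (i + 1) = hom i ≫ Y.map i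

/-- The data of an `n`-exangulated category: an additive bifunctor
`E : Cᵒᵖ × C ⥤ Ab` together with a predicate singling out the distinguished
`n`-exangles, i.e. the pairs `⟨X, δ⟩` with `s(δ) = [X]`. -/
structure ExData (n : ℕ) (C : Type u) [Category.{v} C] [Preadditive C] :
    Type max u (v + 1) where
  E : Cᵒᵖ ⥤ C ⥤ AddCommGrpCat.{v}
  Dist : ∀ X : ExSeq C, ((E.obj (op (X.obj (n + 1)))).obj (X.obj 0)) → Prop

namespace ExData

variable {n : ℕ} {C : Type u} [Category.{v} C] [Preadditive C] (S : ExData n C)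

/-- `S.Ext Cc A` is the group `E(Cc, A)` of `E`-extensions. -/
abbrev Ext (Cc A : C) : Type v := (S.E.obj (op Cc)).obj A

/-- `a_* δ`, the pushforward of an `E`-extension along `a : A ⟶ A'`. -/
def push {Cc A A' : C} (a : A ⟶ A') (δ : S.Ext Cc A) : S.Ext Cc A' :=
  ((S.E.obj (op Cc)).map a) δ

/-- `c^* δ`, the pullback of an `E`-extension along `c : Cc' ⟶ Cc`. -/
def pull {Cc' Cc A : C} (c : Cc' ⟶ Cc) (δ : S.Ext Cc A) : S.Ext Cc' A :=
  ((S.E.map c.op).app A) δ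

/-- `f` is an inflation if it occurs as the `0`-th differential of a
distinguished `n`-exangle. -/
def IsInflation {A B : C} (f : A ⟶ B) : Prop :=
  ∃ (X : ExSeq C) (δ : S.Ext (X.obj (n + 1)) (X.obj 0)), S.Dist X δ ∧
    ∃ (h0 : X.obj 0 = A) (h1 : X.obj 1 = B),
      X.map 0 = eqToHom h0 ≫ f ≫ eqToHom h1.symm

/-- `f` is a deflation if it occurs as the `n`-th differential of a
distinguished `n`-exangle. -/
def IsDeflation {A B : C} (f : A ⟶ B) : Prop :=
  ∃ (X : ExSeq C) (δ : S.Ext (X.obj (n + 1)) (X.obj 0)), S.Dist X δ ∧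
    ∃ (h0 : X.obj n = A) (h1 : X.obj (n + 1) = B),
      X.map n = eqToHom h0 ≫ f ≫ eqToHom h1.symm

/-- Projective objects. -/
def Proj (P : C) : Prop :=
  ∀ (X : ExSeq C) (δ : S.Ext (X.obj (n + 1)) (X.obj 0)), S.Dist X δ →
    ∀ c : P ⟶ X.obj (n + 1), ∃ b : P ⟶ X.obj n, b ≫ X.map n = c

/-- Injective objects. -/
def Inj (I : C) : Prop :=
  ∀ (X : ExSeq C) (δ : S.Ext (X.obj (n + 1)) (X.obj 0)), S.Dist X δ →
    ∀ c : X.obj 0 ⟶ I, ∃ b : X.obj 1 ⟶ I, X.map 0 ≫ b = c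

/-- `C` has enough projectives. -/
def EnoughProj : Prop :=
  ∀ Cc : C, ∃ (X : ExSeq C) (δ : S.Ext (X.obj (n + 1)) (X.obj 0)),
    S.Dist X δ ∧ X.obj (n + 1) = Cc ∧ ∀ i, 1 ≤ i → i ≤ n → S.Proj (X.obj i)

/-- `C` has enough injectives. -/
def EnoughInj : Prop :=
  ∀ A : C, ∃ (X : ExSeq C) (δ : S.Ext (X.obj (n + 1)) (X.obj 0)),
    S.Dist X δ ∧ X.obj 0 = A ∧ ∀ i, 1 ≤ i → i ≤ n → S.Inj (X.obj i)

end ExData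

section Cone

variable (n : ℕ) {C : Type u} [Category.{v} C] [Preadditive C] [HasBinaryBiproducts C]

/-- `M` is the mapping cone of a morphism `f : X ⟶ Y` of `n`-exangles whose
`0`-th component is (up to the identifications) an identity. -/
structure IsCone {X Y : ExSeq C} (f : ExSeqHom n X Y) (M : ExSeq C) : Prop where
  h0 : M.obj 0 = X.obj 1
  hlast : M.obj (n + 1) = Y.obj (n + 1)
  hmid : ∀ i, i + 1 ≤ n → M.obj (i + 1) = (X.obj (i + 2) ⊞ Y.obj (i + 1))
  map0 : ∀ h : 1 ≤ n, M.map 0 =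
    eqToHom h0 ≫ biprod.lift (-(X.map 1)) (f.hom 1) ≫ eqToHom (hmid 0 h).symm
  mapmid : ∀ i (h : i + 2 ≤ n), M.map (i + 1) =
    eqToHom (hmid i (by omega)) ≫
      biprod.desc (biprod.lift (-(X.map (i + 2))) (f.hom (i + 2)))
        (biprod.lift 0 (Y.map (i + 1))) ≫ eqToHom (hmid (i + 1) h).symm
  maplast : ∀ i (h : i + 1 = n), M.map (i + 1) =
    eqToHom (hmid i (by omega)) ≫ biprod.desc (f.hom (i + 2)) (Y.map (i + 1)) ≫
      eqToHom (show Y.obj (i + 2) = M.obj (i + 2) from by subst h; exact hlast.symm)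

/-- `N` is the mapping cocone of a morphism `g : Y ⟶ X` of `n`-exangles whose
`(n+1)`-st component is (up to the identifications) an identity. -/
structure IsCocone {Y X : ExSeq C} (g : ExSeqHom n Y X) (N : ExSeq C) : Prop where
  h0 : N.obj 0 = Y.obj 0
  hlast : N.obj (n + 1) = X.obj n
  hmid : ∀ i, i + 1 ≤ n → N.obj (i + 1) = (Y.obj (i + 1) ⊞ X.obj i)
  map0 : ∀ h : 1 ≤ n, N.map 0 =
    eqToHom h0 ≫ biprod.lift (-(Y.map 0)) (g.hom 0) ≫ eqToHom (hmid 0 h).symm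
  mapmid : ∀ i (h : i + 2 ≤ n), N.map (i + 1) =
    eqToHom (hmid i (by omega)) ≫
      biprod.desc (biprod.lift (-(Y.map (i + 1))) (g.hom (i + 1)))
        (biprod.lift 0 (X.map i)) ≫ eqToHom (hmid (i + 1) h).symm
  maplast : ∀ i (h : i + 1 = n), N.map (i + 1) =
    eqToHom (hmid i (by omega)) ≫ biprod.desc (g.hom (i + 1)) (X.map i) ≫
      eqToHom (show X.obj (i + 1) = N.obj (i + 2) from by subst h; exact hlast.symm)

end Cone

/-- The axioms (R0), (R1), (R2), (EA1), (EA2), (EA2ᵒᵖ) for the data of an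
`n`-exangulated category, following Herschend–Liu–Nakaoka. -/
structure IsExangulated {n : ℕ} {C : Type u} [Category.{v} C] [Preadditive C]
    [HasBinaryBiproducts C] (S : ExData n C) : Prop where
  /-- `E` is additive in the contravariant variable. -/
  additive_left : S.E.Additive
  /-- `E` is additive in the covariant variable. -/
  additive_right : ∀ X : Cᵒᵖ, (S.E.obj X).Additive
  /-- every `E`-extension admits a realization. -/
  realize : ∀ (A Cc : C) (δ : S.Ext Cc A), ∃ (X : ExSeq C)
    (h0 : X.obj 0 = A) (h1 : X.obj (n + 1) = Cc),
      S.Dist X (S.push (eqToHom h0.symm) (S.pull (eqToHom h1) δ))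
  /-- (R0): morphisms of `E`-extensions lift to morphisms of realizations. -/
  lift : ∀ (X Y : ExSeq C) (δX : S.Ext (X.obj (n + 1)) (X.obj 0))
    (δY : S.Ext (Y.obj (n + 1)) (Y.obj 0)), S.Dist X δX → S.Dist Y δY →
    ∀ (a : X.obj 0 ⟶ Y.obj 0) (c : X.obj (n + 1) ⟶ Y.obj (n + 1)),
      S.push a δX = S.pull c δY →
      ∃ f : ExSeqHom n X Y, f.hom 0 = a ∧ f.hom (n + 1) = c
  /-- (R1), covariant part, middle. -/
  ex_cov_mid : ∀ (X : ExSeq C) (δ : S.Ext (X.obj (n + 1)) (X.obj 0)), S.Dist X δ →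
    ∀ i, i + 1 ≤ n → ∀ (Z : C) (g : Z ⟶ X.obj (i + 1)),
      (g ≫ X.map (i + 1) = 0 ↔ ∃ h : Z ⟶ X.obj i, h ≫ X.map i = g)
  /-- (R1), covariant part, last position. -/
  ex_cov_last : ∀ (X : ExSeq C) (δ : S.Ext (X.obj (n + 1)) (X.obj 0)), S.Dist X δ →
    ∀ (Z : C) (g : Z ⟶ X.obj (n + 1)),
      (S.pull g δ = 0 ↔ ∃ h : Z ⟶ X.obj n, h ≫ X.map n = g)
  /-- (R1), contravariant part, middle. -/
  ex_con_mid : ∀ (X : ExSeq C) (δ : S.Ext (X.obj (n + 1)) (X.obj 0)), S.Dist X δ →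
    ∀ i, i + 1 ≤ n → ∀ (Z : C) (g : X.obj (i + 1) ⟶ Z),
      (X.map i ≫ g = 0 ↔ ∃ h : X.obj (i + 2) ⟶ Z, X.map (i + 1) ≫ h = g)
  /-- (R1), contravariant part, last position. -/
  ex_con_last : ∀ (X : ExSeq C) (δ : S.Ext (X.obj (n + 1)) (X.obj 0)), S.Dist X δ →
    ∀ (Z : C) (g : X.obj 0 ⟶ Z),
      (S.push g δ = 0 ↔ ∃ h : X.obj 1 ⟶ Z, X.map 0 ≫ h = g)
  /-- (R2): the trivial complex `A = A → 0 → ⋯ → 0` realizes `0 ∈ E(0, A)`. -/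
  r2 : ∀ A : C, ∃ (X : ExSeq C) (h0 : X.obj 0 = A) (h1 : X.obj 1 = A),
    X.map 0 = eqToHom (h0.trans h1.symm) ∧
    (∀ i, 2 ≤ i → i ≤ n + 1 → IsZero (X.obj i)) ∧ S.Dist X 0
  /-- (R2)ᵒᵖ: the trivial complex `0 → ⋯ → 0 → A = A` realizes `0 ∈ E(A, 0)`. -/
  r2' : ∀ A : C, ∃ (X : ExSeq C) (h0 : X.obj n = A) (h1 : X.obj (n + 1) = A),
    X.map n = eqToHom (h0.trans h1.symm) ∧
    (∀ i, i + 1 ≤ n → IsZero (X.obj i)) ∧ S.Dist X 0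
  /-- (EA1): inflations are closed under composition. -/
  comp_infl : ∀ {A B D : C} (f : A ⟶ B) (g : B ⟶ D),
    S.IsInflation f → S.IsInflation g → S.IsInflation (f ≫ g)
  /-- (EA1): deflations are closed under composition. -/
  comp_defl : ∀ {A B D : C} (f : A ⟶ B) (g : B ⟶ D),
    S.IsDeflation f → S.IsDeflation g → S.IsDeflation (f ≫ g)
  /-- (EA2): good lifts of `(id, c)` exist. -/
  ea2 : ∀ (X Y : ExSeq C) (ρ : S.Ext (Y.obj (n + 1)) (Y.obj 0))
    (hA : X.obj 0 = Y.obj 0) (c : X.obj (n + 1) ⟶ Y.obj (n + 1)),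
    S.Dist Y ρ → S.Dist X (S.push (eqToHom hA.symm) (S.pull c ρ)) →
    ∃ (f : ExSeqHom n X Y) (_ : f.hom 0 = eqToHom hA) (_ : f.hom (n + 1) = c)
      (M : ExSeq C) (hM : IsCone n f M),
      S.Dist M (S.push (eqToHom hM.h0.symm)
        (S.pull (eqToHom hM.hlast) (S.push (eqToHom hA.symm ≫ X.map 0) ρ)))
  /-- (EA2)ᵒᵖ: good lifts of `(a, id)` exist. -/
  ea2op : ∀ (Y X : ExSeq C) (ρ : S.Ext (Y.obj (n + 1)) (Y.obj 0))
    (hC : Y.obj (n + 1) = X.obj (n + 1)) (a : Y.obj 0 ⟶ X.obj 0),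
    S.Dist Y ρ → S.Dist X (S.push a (S.pull (eqToHom hC.symm) ρ)) →
    ∃ (g : ExSeqHom n Y X) (_ : g.hom 0 = a) (_ : g.hom (n + 1) = eqToHom hC)
      (N : ExSeq C) (hN : IsCocone n g N),
      S.Dist N (S.push (eqToHom hN.h0.symm)
        (S.pull (eqToHom hN.hlast ≫ X.map n ≫ eqToHom hC.symm) ρ))
section Quot

variable {C : Type u} [Category.{v} C] [Preadditive C] [HasZeroObject C]
  [HasBinaryBiproducts C]

/-- A (full) additive subcategory of `C`, given by a class of objects closed
under isomorphisms, finite direct sums and containing the zero objects. -/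
structure AddSubcat (C : Type u) [Category.{v} C] [Preadditive C]
    [HasZeroObject C] [HasBinaryBiproducts C] : Type max u v where
  mem : C → Prop
  zero_mem : ∀ Z : C, IsZero Z → mem Z
  iso_mem : ∀ {A B : C}, (A ≅ B) → mem A → mem B
  sum_mem : ∀ {A B : C}, mem A → mem B → mem (A ⊞ B)

variable (𝒳 : AddSubcat C)

/-- `f : A ⟶ B` is `𝒳`-monic. -/
def XMonic {A B : C} (f : A ⟶ B) : Prop :=
  ∀ M : C, 𝒳.mem M → ∀ g : A ⟶ M, ∃ h : B ⟶ M, f ≫ h = g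

/-- `f : A ⟶ B` is `𝒳`-epic. -/
def XEpic {A B : C} (f : A ⟶ B) : Prop :=
  ∀ M : C, 𝒳.mem M → ∀ g : M ⟶ B, ∃ h : M ⟶ A, h ≫ f = g

/-- `f : A ⟶ B` is a left `𝒳`-approximation of `A`. -/
def LeftApprox {A B : C} (f : A ⟶ B) : Prop := 𝒳.mem B ∧ XMonic 𝒳 f

/-- `f : A ⟶ B` is a right `𝒳`-approximation of `B`. -/
def RightApprox {A B : C} (f : A ⟶ B) : Prop := 𝒳.mem A ∧ XEpic 𝒳 f

/-- The ideal `[𝒳](A,B)` of morphisms factoring through an object of `𝒳`. -/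
def homIdeal (A B : C) : AddSubgroup (A ⟶ B) where
  carrier := {f | ∃ M : C, 𝒳.mem M ∧ ∃ (g : A ⟶ M) (h : M ⟶ B), g ≫ h = f}
  zero_mem' := ⟨(0 : C), 𝒳.zero_mem (0 : C) (isZero_zero C), 0, 0, by simp⟩
  add_mem' := by
    rintro f f' ⟨M, hM, g, h, rfl⟩ ⟨M', hM', g', h', rfl⟩
    exact ⟨M ⊞ M', 𝒳.sum_mem hM hM', biprod.lift g g', biprod.desc h h', by simp⟩
  neg_mem' := by
    rintro f ⟨M, hM, g, h, rfl⟩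
    exact ⟨M, hM, -g, h, by simp⟩

lemma homIdeal.comp_right {A B B' : C} {f : A ⟶ B} (hf : f ∈ homIdeal 𝒳 A B)
    (u : B ⟶ B') : f ≫ u ∈ homIdeal 𝒳 A B' := by
  obtain ⟨M, hM, g, h, rfl⟩ := hf
  exact ⟨M, hM, g, h ≫ u, by simp⟩

lemma homIdeal.comp_left {A' A B : C} {f : A ⟶ B} (hf : f ∈ homIdeal 𝒳 A B)
    (u : A' ⟶ A) : u ≫ f ∈ homIdeal 𝒳 A' B := by
  obtain ⟨M, hM, g, h, rfl⟩ := hf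
  exact ⟨M, hM, u ≫ g, h, by simp⟩

/-- The objects of the quotient category `C/𝒳`. -/
@[ext]
structure QuotObj (𝒳 : AddSubcat C) : Type u where
  as : C

/-- The quotient (additive) category `C/𝒳`. -/
instance QuotObj.category : Category.{v} (QuotObj 𝒳) where
  Hom A B := (A.as ⟶ B.as) ⧸ homIdeal 𝒳 A.as B.as
  id A := QuotientAddGroup.mk (𝟙 A.as)
  comp {A B D} f g := Quotient.liftOn₂ f g
    (fun f g => QuotientAddGroup.mk (f ≫ g))
    (by
      intro a₁ a₂ b₁ b₂ h₁ h₂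
      replace h₁ := QuotientAddGroup.leftRel_apply.mp h₁
      replace h₂ := QuotientAddGroup.leftRel_apply.mp h₂
      show QuotientAddGroup.mk (a₁ ≫ a₂) = QuotientAddGroup.mk (b₁ ≫ b₂)
      rw [QuotientAddGroup.eq]
      have heq : -(a₁ ≫ a₂) + b₁ ≫ b₂ =
          (-a₁ + b₁) ≫ a₂ + b₁ ≫ (-a₂ + b₂) := by
        simp only [Preadditive.add_comp, Preadditive.comp_add,
          Preadditive.neg_comp, Preadditive.comp_neg]
        abel
      rw [heq]
      exact (homIdeal 𝒳 _ _).add_mem (homIdeal.comp_right 𝒳 h₁ a₂)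
        (homIdeal.comp_left 𝒳 h₂ b₁))
  id_comp f := by
    induction f using Quotient.inductionOn
    exact congrArg _ (Category.id_comp _)
  comp_id f := by
    induction f using Quotient.inductionOn
    exact congrArg _ (Category.comp_id _)
  assoc f g h := by
    induction f using Quotient.inductionOn
    induction g using Quotient.inductionOn
    induction h using Quotient.inductionOn
    exact congrArg _ (Category.assoc _ _ _)

instance QuotObj.preadditive : Preadditive (QuotObj 𝒳) where
  homGroup A B := inferInstanceAs (AddCommGroup ((A.as ⟶ B.as) ⧸ homIdeal 𝒳 A.as B.as))
  add_comp A B D f f' g := by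
    induction f using Quotient.inductionOn
    induction f' using Quotient.inductionOn
    induction g using Quotient.inductionOn
    exact congrArg _ (Preadditive.add_comp _ _ _ _ _ _)
  comp_add A B D f g g' := by
    induction f using Quotient.inductionOn
    induction g using Quotient.inductionOn
    induction g' using Quotient.inductionOn
    exact congrArg _ (Preadditive.comp_add _ _ _ _ _ _)

/-- The quotient functor `C ⥤ C/𝒳`. -/
def quotFunctor : C ⥤ QuotObj 𝒳 where
  obj A := ⟨A⟩
  map f := QuotientAddGroup.mk f
  map_id _ := rfl
  map_comp _ _ := rfl

end Quot

section QuotBiprod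

variable {C : Type u} [Category.{v} C] [Preadditive C] [HasZeroObject C]
  [HasBinaryBiproducts C] (𝒳 : AddSubcat C)

instance QuotObj.hasBinaryBiproducts : HasBinaryBiproducts (QuotObj 𝒳) := by
  apply HasBinaryBiproducts.mk
  intro A B
  apply HasBinaryBiproduct.mk
  refine ⟨{ pt := ⟨A.as ⊞ B.as⟩
            fst := QuotientAddGroup.mk biprod.fst
            snd := QuotientAddGroup.mk biprod.snd
            inl := QuotientAddGroup.mk biprod.inl
            inr := QuotientAddGroup.mk biprod.inr
            inl_fst := ?_, inl_snd := ?_, inr_fst := ?_, inr_snd := ?_ }, ?_⟩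
  · show QuotientAddGroup.mk (biprod.inl ≫ biprod.fst) =
      QuotientAddGroup.mk (𝟙 A.as)
    rw [biprod.inl_fst]
  · show QuotientAddGroup.mk (biprod.inl ≫ biprod.snd) = _
    rw [biprod.inl_snd]; rfl
  · show QuotientAddGroup.mk (biprod.inr ≫ biprod.fst) = _
    rw [biprod.inr_fst]; rfl
  · show QuotientAddGroup.mk (biprod.inr ≫ biprod.snd) =
      QuotientAddGroup.mk (𝟙 B.as)
    rw [biprod.inr_snd]
  · apply isBinaryBilimitOfTotal
    show QuotientAddGroup.mk (biprod.fst ≫ biprod.inl) +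
        QuotientAddGroup.mk (biprod.snd ≫ biprod.inr) =
      QuotientAddGroup.mk (𝟙 (A.as ⊞ B.as))
    rw [show QuotientAddGroup.mk (biprod.fst ≫ biprod.inl) + QuotientAddGroup.mk (biprod.snd ≫ biprod.inr) = (QuotientAddGroup.mk (biprod.fst ≫ biprod.inl + biprod.snd ≫ biprod.inr) : (⟨A.as ⊞ B.as⟩ : QuotObj 𝒳) ⟶ ⟨A.as ⊞ B.as⟩) from rfl]
    rw [biprod.total]

end QuotBiprod
section NAbelian

variable (n : ℕ) {C : Type u} [Category.{v} C] [Preadditive C]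

/-- `g` is a weak cokernel of `f`. -/
def IsWeakCokernel {A B D : C} (f : A ⟶ B) (g : B ⟶ D) : Prop :=
  f ≫ g = 0 ∧ ∀ (Z : C) (h : B ⟶ Z), f ≫ h = 0 → ∃ p : D ⟶ Z, g ≫ p = h

/-- `f` is a weak kernel of `g`. -/
def IsWeakKernel {A B D : C} (f : A ⟶ B) (g : B ⟶ D) : Prop :=
  f ≫ g = 0 ∧ ∀ (Z : C) (h : Z ⟶ B), h ≫ g = 0 → ∃ p : Z ⟶ A, p ≫ f = h

/-- The sequence `S.obj 1 → ⋯ → S.obj (n+1)` is an `n`-cokernel of `S.map 0`,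
i.e. `0 → (S_{n+1}, B) → ⋯ → (S_1, B) → (S_0, B)` is exact for every `B`. -/
def IsNCokernelOf (S : ExSeq C) : Prop :=
  (∀ i, i + 1 ≤ n → ∀ (Z : C) (h : S.obj (i + 1) ⟶ Z),
    (S.map i ≫ h = 0 ↔ ∃ p : S.obj (i + 2) ⟶ Z, S.map (i + 1) ≫ p = h)) ∧
  (∀ (Z : C) (g : S.obj (n + 1) ⟶ Z), S.map n ≫ g = 0 → g = 0)

/-- The sequence `S.obj 0 → ⋯ → S.obj n` is an `n`-kernel of `S.map n`,
i.e. `0 → (B, S_0) → ⋯ → (B, S_n) → (B, S_{n+1})` is exact for every `B`. -/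
def IsNKernelOf (S : ExSeq C) : Prop :=
  (∀ i, i + 1 ≤ n → ∀ (Z : C) (h : Z ⟶ S.obj (i + 1)),
    (h ≫ S.map (i + 1) = 0 ↔ ∃ p : Z ⟶ S.obj i, p ≫ S.map i = h)) ∧
  (∀ (Z : C) (g : Z ⟶ S.obj 0), g ≫ S.map 0 = 0 → g = 0)

/-- `n`-exact sequences. -/
def IsNExactSeq (S : ExSeq C) : Prop := IsNCokernelOf n S ∧ IsNKernelOf n S

/-- The sequence `S` starts with (a copy of) the morphism `f`. -/
def ExSeq.startsWith (S : ExSeq C) {A B : C} (f : A ⟶ B) : Prop :=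
  ∃ (h0 : S.obj 0 = A) (h1 : S.obj 1 = B), S.map 0 = eqToHom h0 ≫ f ≫ eqToHom h1.symm

/-- The sequence `S` ends (at position `n`) with (a copy of) the morphism `f`. -/
def ExSeq.endsWith (n : ℕ) (S : ExSeq C) {A B : C} (f : A ⟶ B) : Prop :=
  ∃ (h0 : S.obj n = A) (h1 : S.obj (n + 1) = B),
    S.map n = eqToHom h0 ≫ f ≫ eqToHom h1.symm

/-- `n`-abelian category, following Jasso: an additive category with split
idempotents in which every morphism has an `n`-kernel and an `n`-cokernel,
every monomorphism is the `0`-th morphism of an `n`-exact sequence, and every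
epimorphism is the `n`-th morphism of an `n`-exact sequence. -/
structure IsNAbelian (n : ℕ) (D : Type u) [Category.{v} D] [Preadditive D] : Prop where
  hasFiniteBiproducts : HasFiniteBiproducts D
  idemSplit : IsIdempotentComplete D
  hasNCokernels : ∀ {A B : D} (f : A ⟶ B),
    ∃ S : ExSeq D, S.startsWith f ∧ IsNCokernelOf n S
  hasNKernels : ∀ {A B : D} (f : A ⟶ B),
    ∃ S : ExSeq D, S.endsWith n f ∧ IsNKernelOf n S
  monoIsNExact : ∀ {A B : D} (f : A ⟶ B), Mono f →
    ∃ S : ExSeq D, S.startsWith f ∧ IsNExactSeq n S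
  epiIsNExact : ∀ {A B : D} (f : A ⟶ B), Epi f →
    ∃ S : ExSeq D, S.endsWith n f ∧ IsNExactSeq n S

end NAbelian

section ClusterTilting

variable {n : ℕ} {C : Type u} [Category.{v} C] [Preadditive C] [HasZeroObject C]
  [HasBinaryBiproducts C]

/-- A cluster tilting subcategory of an `n`-exangulated category. -/
def ExData.ClusterTilting (S : ExData n C) (𝒳 : AddSubcat C) : Prop :=
  (∀ X X' : C, 𝒳.mem X → 𝒳.mem X' → ∀ δ : S.Ext X X', δ = 0) ∧
  (∀ Cc : C, ∃ (X : ExSeq C) (δ : S.Ext (X.obj (n + 1)) (X.obj 0)),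
    S.Dist X δ ∧ X.obj (n + 1) = Cc ∧ ∀ i, i ≤ n → 𝒳.mem (X.obj i)) ∧
  (∀ A : C, ∃ (X : ExSeq C) (δ : S.Ext (X.obj (n + 1)) (X.obj 0)),
    S.Dist X δ ∧ X.obj 0 = A ∧ ∀ i, 1 ≤ i → i ≤ n + 1 → 𝒳.mem (X.obj i))

end ClusterTilting
section Angulated

variable {C : Type u} [Category.{v} C] [Preadditive C]

/-- An `(n+2)`-`Σ`-sequence `A₀ → A₁ → ⋯ → A_{n+1} → Σ A₀`. -/
structure SgSeq (C : Type u) [Category.{v} C] (Sg : C ⥤ C) (n : ℕ) :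
    Type max u v where
  obj : ℕ → C
  map : ∀ i, obj i ⟶ obj (i + 1)
  ext : obj (n + 1) ⟶ Sg.obj (obj 0)

/-- A morphism of `(n+2)`-`Σ`-sequences. -/
structure SgSeqHom {C : Type u} [Category.{v} C] {Sg : C ⥤ C} {n : ℕ}
    (X Y : SgSeq C Sg n) : Type max u v where
  hom : ∀ i, X.obj i ⟶ Y.obj i
  comm : ∀ i, i ≤ n → X.map i ≫ hom (i + 1) = hom i ≫ Y.map i
  comm_ext : X.ext ≫ Sg.map (hom 0) = hom (n + 1) ≫ Y.ext

variable {Sg : C ⥤ C} {n : ℕ}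

/-- `T` is (equal to) the trivial sequence `0 → A = A → 0 → ⋯ → 0`. -/
def IsTrivialSgSeq (A : C) (T : SgSeq C Sg n) : Prop :=
  IsZero (T.obj 0) ∧
  (∃ (h1 : T.obj 1 = A) (h2 : T.obj 2 = A), T.map 1 = eqToHom (h1.trans h2.symm)) ∧
  (∀ i, 3 ≤ i → i ≤ n + 1 → IsZero (T.obj i))

variable [HasBinaryBiproducts C]

/-- `U` is the direct sum of the sequences `X` and `Y`. -/
def IsBiprodSgSeq (X Y U : SgSeq C Sg n) : Prop :=
  ∃ e : ∀ i, i ≤ n + 1 → U.obj i = (X.obj i ⊞ Y.obj i),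
    (∀ i (h : i + 1 ≤ n + 1), U.map i = eqToHom (e i (by omega)) ≫
      biprod.map (X.map i) (Y.map i) ≫ eqToHom (e (i + 1) h).symm) ∧
    U.ext = eqToHom (e (n + 1) le_rfl) ≫
      biprod.desc (X.ext ≫ Sg.map biprod.inl) (Y.ext ≫ Sg.map biprod.inr) ≫
        eqToHom (congrArg Sg.obj (e 0 (by omega)).symm)

/-- `T` is the left rotation of `X`. -/
def IsRotation (X T : SgSeq C Sg n) : Prop :=
  ∃ (e : ∀ i, i ≤ n → T.obj i = X.obj (i + 1)) (el : T.obj (n + 1) = Sg.obj (X.obj 0)),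
    (∀ i (h : i + 1 ≤ n), T.map i = eqToHom (e i (by omega)) ≫ X.map (i + 1) ≫
      eqToHom (e (i + 1) h).symm) ∧
    (T.map n = eqToHom (e n le_rfl) ≫ X.ext ≫ eqToHom el.symm) ∧
    (T.ext = eqToHom el ≫ (((-1 : ℤ) ^ n) • Sg.map (X.map 0)) ≫
      eqToHom (congrArg Sg.obj (e 0 (by omega)).symm))

/-- The axioms (RN1), (RN2), (RN3) of a right `(n+2)`-angulated category. -/
structure RightAngulatedRN123 (Sg : C ⥤ C) (n : ℕ) (Θ : Set (SgSeq C Sg n)) : Prop where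
  /-- (RN1)(a): `Θ` is closed under isomorphisms. -/
  iso_closed : ∀ (X Y : SgSeq C Sg n) (f : SgSeqHom X Y),
    (∀ i, i ≤ n + 1 → IsIso (f.hom i)) → X ∈ Θ → Y ∈ Θ
  /-- (RN1)(a): `Θ` is closed under direct sums. -/
  sum_closed : ∀ X Y U : SgSeq C Sg n, X ∈ Θ → Y ∈ Θ → IsBiprodSgSeq X Y U → U ∈ Θ
  /-- (RN1)(b): the trivial sequences belong to `Θ`. -/
  trivial_mem : ∀ A : C, ∃ T ∈ Θ, IsTrivialSgSeq A T
  /-- (RN1)(c): every morphism extends to a right `(n+2)`-angle. -/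
  extend : ∀ {A B : C} (f : A ⟶ B), ∃ T ∈ Θ, ∃ (h0 : T.obj 0 = A) (h1 : T.obj 1 = B),
    T.map 0 = eqToHom h0 ≫ f ≫ eqToHom h1.symm
  /-- (RN2): `Θ` is closed under left rotation. -/
  rot : ∀ X ∈ Θ, ∀ T, IsRotation X T → T ∈ Θ
  /-- (RN3): commutative squares extend to morphisms of right `(n+2)`-angles. -/
  rn3 : ∀ X Y : SgSeq C Sg n, X ∈ Θ → Y ∈ Θ →
    ∀ (a : X.obj 0 ⟶ Y.obj 0) (b : X.obj 1 ⟶ Y.obj 1), X.map 0 ≫ b = a ≫ Y.map 0 →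
      ∃ f : SgSeqHom X Y, f.hom 0 = a ∧ f.hom 1 = b

/-- A right `(n+2)`-angulated category: (RN1)–(RN3) together with the higher
octahedral axiom (RN4). -/
structure RightAngulated (Sg : C ⥤ C) (n : ℕ) (Θ : Set (SgSeq C Sg n)) extends
    RightAngulatedRN123 Sg n Θ : Prop where
  /-- (RN4): the higher octahedral axiom. -/
  rn4 : ∀ X Y U : SgSeq C Sg n, X ∈ Θ → Y ∈ Θ → U ∈ Θ →
    ∀ (h0 : Y.obj 0 = X.obj 0) (hU0 : U.obj 0 = X.obj 1) (hU1 : U.obj 1 = Y.obj 1),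
    Y.map 0 = eqToHom h0 ≫ X.map 0 ≫ (eqToHom hU0.symm ≫ U.map 0 ≫ eqToHom hU1) →
    ∃ (φ : ∀ i, X.obj i ⟶ Y.obj i) (ψ : ∀ i, Y.obj i ⟶ U.obj i)
      (φ' : ∀ i, X.obj (i + 1) ⟶ U.obj i),
      φ 0 = eqToHom h0.symm ∧
      φ 1 = eqToHom hU0.symm ≫ U.map 0 ≫ eqToHom hU1 ∧
      (∀ i, i ≤ n → X.map i ≫ φ (i + 1) = φ i ≫ Y.map i) ∧
      (φ (n + 1) ≫ Y.ext ≫ eqToHom (congrArg Sg.obj h0) = X.ext) ∧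
      (ψ (n + 1) ≫ U.ext ≫ eqToHom (congrArg Sg.obj hU0) =
        Y.ext ≫ eqToHom (congrArg Sg.obj h0) ≫ Sg.map (X.map 0)) ∧
      ∃ V ∈ Θ, ∃ (hV0 : V.obj 0 = X.obj 2)
        (hV1 : 2 ≤ n → V.obj 1 = (X.obj 3 ⊞ Y.obj 2))
        (hVmid : ∀ i, 2 ≤ i → i + 1 ≤ n → V.obj i = ((X.obj (i + 2) ⊞ Y.obj (i + 1)) ⊞ U.obj i))
        (hVn : ∀ j, j = n → 2 ≤ n → V.obj j = (Y.obj (j + 1) ⊞ U.obj j))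
        (hVl : V.obj (n + 1) = U.obj (n + 1)),
        (∀ h : 2 ≤ n, V.map 0 =
          eqToHom hV0 ≫ biprod.lift (X.map 2) (φ 2) ≫ eqToHom (hV1 h).symm) ∧
        (∀ h : 3 ≤ n, V.map 1 = eqToHom (hV1 (by omega)) ≫
          biprod.desc (biprod.lift (biprod.lift (-(X.map 3)) (φ 3)) (φ' 2))
            (biprod.lift (biprod.lift 0 (-(Y.map 2))) (ψ 2)) ≫
          eqToHom (hVmid 2 le_rfl h).symm) ∧
        (∀ i (h2 : 2 ≤ i) (hn : i + 2 ≤ n), V.map i =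
          eqToHom (hVmid i (by omega) (by omega)) ≫
          biprod.desc
            (biprod.desc
              (biprod.lift (biprod.lift (-(X.map (i + 2))) (((-1 : ℤ) ^ (i + 1)) • φ (i + 2))) (φ' (i + 1)))
              (biprod.lift (biprod.lift 0 (-(Y.map (i + 1)))) (ψ (i + 1))))
            (biprod.lift (biprod.lift 0 0) (U.map i)) ≫
          eqToHom (hVmid (i + 1) (by omega) (by omega)).symm) ∧
        (∀ h : n = 2, V.map 1 = eqToHom (hV1 (by omega)) ≫
          biprod.desc (biprod.lift (φ 3) (φ' 2)) (biprod.lift (-(Y.map 2)) (ψ 2)) ≫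
          eqToHom (hVn 2 h.symm (by omega)).symm) ∧
        (∀ i (h2 : 2 ≤ i) (hn : i + 1 = n), V.map i =
          eqToHom (hVmid i (by omega) (by omega)) ≫
          biprod.desc
            (biprod.desc
              (biprod.lift (((-1 : ℤ) ^ (i + 1)) • φ (i + 2)) (φ' (i + 1)))
              (biprod.lift (-(Y.map (i + 1))) (ψ (i + 1))))
            (biprod.lift 0 (U.map i)) ≫
          eqToHom (hVn (i + 1) (by omega) (by omega)).symm) ∧
        (∀ j (hj : j = n) (hn : 2 ≤ n), V.map j =
          eqToHom (hVn j hj hn) ≫ biprod.desc (ψ (j + 1)) (U.map j) ≫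
          eqToHom (show U.obj (j + 1) = V.obj (j + 1) from by rw [hj]; exact hVl.symm)) ∧
        (V.ext = eqToHom hVl ≫ U.ext ≫ eqToHom (congrArg Sg.obj hU0) ≫
          Sg.map (X.map 1) ≫ eqToHom (congrArg Sg.obj hV0).symm) ∧
        (∀ h : n = 1, ∃ e1 : V.obj 1 = Y.obj 2,
          V.map 0 = eqToHom hV0 ≫ φ 2 ≫ eqToHom e1.symm ∧
          V.map 1 = eqToHom e1 ≫ ψ 2 ≫
            eqToHom (show U.obj 2 = V.obj 2 from by
              rw [show (2 : ℕ) = n + 1 from by omega]; exact hVl.symm))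

/-- An `(n+2)`-angulated category in the sense of Geiss–Keller–Oppermann:
in addition to being right `(n+2)`-angulated, the suspension is an equivalence,
and `Θ` is closed under direct summands and inverse rotation. -/
structure Angulated (Sg : C ⥤ C) (n : ℕ) (Θ : Set (SgSeq C Sg n)) extends
    RightAngulated Sg n Θ : Prop where
  sg_equiv : Sg.IsEquivalence
  sg_additive : Sg.Additive
  rot_rev : ∀ X T : SgSeq C Sg n, IsRotation X T → T ∈ Θ → X ∈ Θ
  summand_closed : ∀ X Y U : SgSeq C Sg n, IsBiprodSgSeq X Y U → U ∈ Θ → X ∈ Θ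

end Angulated

/-!
Every `a : A ⟶ B` extends to a morphism of `E`-extensions `(a, c) : δ_A ⟶ δ_B`: since `f₀ᴬ`
is a left `𝒳`-approximation, `a_* δ_A` vanishes after pushing along `f₀ᴮ`, and by (EA2) the
sequence `C(GA, GB) → E(GA, B) → E(GA, X₁ᴮ)` is exact. If `(a, c)` and `(a', c')` are two such
and `a' - a` factors through `𝒳`, then `(a' - a)_* δ_A = 0` because `f₀ᴬ` is `𝒳`-monic, so
`(c' - c)^* δ_B = 0` and `c' - c` factors through `Xₙᴮ ∈ 𝒳`. Hence `c̄` depends only on `ā`,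
and it is compatible with identities, composition and sums.
-/

namespace ExData

variable {n : ℕ} {C : Type u} [Category.{v} C] [Preadditive C] (S : ExData n C)

@[simp]
lemma push_id {D A : C} (δ : S.Ext D A) : S.push (𝟙 A) δ = δ := by
  simp [push]

@[simp]
lemma pull_id {D A : C} (δ : S.Ext D A) : S.pull (𝟙 D) δ = δ := by
  simp [pull]

@[simp]
lemma push_push {D A A' A'' : C} (f : A ⟶ A') (g : A' ⟶ A'') (δ : S.Ext D A) :
    S.push g (S.push f δ) = S.push (f ≫ g) δ := by
  simp [push]

@[simp]
lemma pull_pull {D'' D' D A : C} (f : D'' ⟶ D') (g : D' ⟶ D) (δ : S.Ext D A) :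
    S.pull f (S.pull g δ) = S.pull (f ≫ g) δ := by
  simp [pull]

@[simp]
lemma pull_push {D' D A A' : C} (c : D' ⟶ D) (a : A ⟶ A') (δ : S.Ext D A) :
    S.pull c (S.push a δ) = S.push a (S.pull c δ) := by
  simp only [push, pull]
  rw [← comp_apply, (S.E.map c.op).naturality a, comp_apply]

@[simp]
lemma push_zero {D A A' : C} (f : A ⟶ A') : S.push f (0 : S.Ext D A) = 0 := by
  simp [push]

@[simp]
lemma pull_zero {D' D A : C} (c : D' ⟶ D) : S.pull c (0 : S.Ext D A) = 0 := by
  simp [pull]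

lemma push_add {D A A' : C} (f : A ⟶ A') (x y : S.Ext D A) :
    S.push f (x + y) = S.push f x + S.push f y :=
  ((S.E.obj (op D)).map f).hom.map_add x y

lemma pull_add {D' D A : C} (c : D' ⟶ D) (x y : S.Ext D A) :
    S.pull c (x + y) = S.pull c x + S.pull c y :=
  ((S.E.map c.op).app A).hom.map_add x y

lemma push_add_hom (hr : ∀ X : Cᵒᵖ, (S.E.obj X).Additive) {D A A' : C} (f g : A ⟶ A')
    (δ : S.Ext D A) : S.push (f + g) δ = S.push f δ + S.push g δ := by
  simp only [push, Functor.map_add]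
  rfl

lemma push_sub_hom (hr : ∀ X : Cᵒᵖ, (S.E.obj X).Additive) {D A A' : C} (f g : A ⟶ A')
    (δ : S.Ext D A) : S.push (f - g) δ = S.push f δ - S.push g δ := by
  simp only [push, Functor.map_sub]
  rfl

lemma pull_zero_hom (hl : S.E.Additive) {D' D A : C} (δ : S.Ext D A) :
    S.pull (0 : D' ⟶ D) δ = 0 := by
  simp only [pull, op_zero, Functor.map_zero, NatTrans.app_zero]
  rfl

lemma pull_add_hom (hl : S.E.Additive) {D' D A : C} (c c' : D' ⟶ D) (δ : S.Ext D A) :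
    S.pull (c + c') δ = S.pull c δ + S.pull c' δ := by
  simp only [pull, op_add, Functor.map_add, NatTrans.app_add]
  rfl

lemma pull_sub_hom (hl : S.E.Additive) {D' D A : C} (c c' : D' ⟶ D) (δ : S.Ext D A) :
    S.pull (c - c') δ = S.pull c δ - S.pull c' δ := by
  simp only [pull, op_sub, Functor.map_sub, NatTrans.app_sub]
  rfl

end ExData

namespace IsExangulated

variable {n : ℕ} {C : Type u} [Category.{v} C] [Preadditive C] [HasBinaryBiproducts C]
  {S : ExData n C}

lemma push_map_zero_eq_zero (hS : IsExangulated S) {X : ExSeq C}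
    {δ : S.Ext (X.obj (n + 1)) (X.obj 0)} (hX : S.Dist X δ) : S.push (X.map 0) δ = 0 :=
  (hS.ex_con_last X δ hX _ _).mpr ⟨𝟙 _, Category.comp_id _⟩

lemma pull_map_last_eq_zero (hS : IsExangulated S) {X : ExSeq C}
    {δ : S.Ext (X.obj (n + 1)) (X.obj 0)} (hX : S.Dist X δ) : S.pull (X.map n) δ = 0 :=
  (hS.ex_cov_last X δ hX _ _).mpr ⟨𝟙 _, Category.id_comp _⟩

/-- The mapping cone of the good lift provided by (EA2) has zero extension, so its last
differential `[c, Y.map n] : X_{n+1} ⊞ Y_n ⟶ Y_{n+1}` is a split epimorphism. -/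
lemma exists_eq_comp_add_comp_of_push_eq_zero (hS : IsExangulated S) (hn : 0 < n)
    {X Y : ExSeq C} {ρ : S.Ext (Y.obj (n + 1)) (Y.obj 0)} (hY : S.Dist Y ρ)
    (hA : X.obj 0 = Y.obj 0) (c : X.obj (n + 1) ⟶ Y.obj (n + 1))
    (hX : S.Dist X (S.push (eqToHom hA.symm) (S.pull c ρ)))
    (hρ : S.push (eqToHom hA.symm ≫ X.map 0) ρ = 0) {W : C} (g : W ⟶ Y.obj (n + 1)) :
    ∃ (u : W ⟶ X.obj (n + 1)) (v : W ⟶ Y.obj n), g = u ≫ c + v ≫ Y.map n := by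
  obtain ⟨m, rfl⟩ : ∃ m, n = m + 1 := ⟨n - 1, by omega⟩
  obtain ⟨f, -, hfc, M, hM, hMd⟩ := hS.ea2 X Y ρ hA c hY hX
  rw [hρ, S.pull_zero, S.push_zero] at hMd
  obtain ⟨h, hh⟩ := (hS.ex_cov_last M 0 hMd W (g ≫ eqToHom hM.hlast.symm)).mp (S.pull_zero _)
  rw [hM.maplast m rfl] at hh
  refine ⟨h ≫ eqToHom (hM.hmid m le_rfl) ≫ biprod.fst,
    h ≫ eqToHom (hM.hmid m le_rfl) ≫ biprod.snd, ?_⟩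
  have hg := congrArg (· ≫ eqToHom hM.hlast) hh
  simp only [Category.assoc, eqToHom_trans, eqToHom_refl, Category.comp_id] at hg
  rw [← hg, ← hfc, biprod.desc_eq]
  simp only [Preadditive.comp_add, Category.assoc]

/-- Apply (EA2) to `inr : X_{n+1} ⟶ D ⊞ X_{n+1}` and a realization of
`σ ⊕ ρ ∈ E(D ⊞ X_{n+1}, X_0)`, then pull back along `inl`. -/
lemma exists_pull_eq_of_push_eq_zero (hS : IsExangulated S) (hn : 0 < n) {X : ExSeq C}
    {ρ : S.Ext (X.obj (n + 1)) (X.obj 0)} (hX : S.Dist X ρ) {D : C}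
    (σ : S.Ext D (X.obj 0)) (hσ : S.push (X.map 0) σ = 0) :
    ∃ c : D ⟶ X.obj (n + 1), S.pull c ρ = σ := by
  set γ := S.pull biprod.fst σ + S.pull biprod.snd ρ
  have hγl : S.pull biprod.inl γ = σ := by
    simp [γ, S.pull_add, S.pull_zero_hom hS.additive_left]
  have hγr : S.pull biprod.inr γ = ρ := by
    simp [γ, S.pull_add, S.pull_zero_hom hS.additive_left]
  have hγ : S.push (X.map 0) γ = 0 := by
    rw [S.push_add, ← S.pull_push, ← S.pull_push, hσ, hS.push_map_zero_eq_zero hX]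
    simp
  obtain ⟨Z, h0, h1, hZ⟩ := hS.realize (X.obj 0) _ γ
  obtain ⟨u, v, huv⟩ := hS.exists_eq_comp_add_comp_of_push_eq_zero hn hZ h0.symm
    (biprod.inr ≫ eqToHom h1.symm) (by simpa [hγr] using hX)
    (by
      simp only [S.push_push, eqToHom_trans_assoc, eqToHom_refl, Category.id_comp]
      rw [← S.pull_push, hγ, S.pull_zero])
    (biprod.inl ≫ eqToHom h1.symm)
  refine ⟨u, ?_⟩
  have hpull := congrArg (fun x => S.pull x (S.push (eqToHom h0.symm) (S.pull (eqToHom h1) γ)))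
    huv
  simp only [S.pull_add_hom hS.additive_left, ← S.pull_pull, hS.pull_map_last_eq_zero hZ,
    S.pull_zero, add_zero] at hpull
  simpa [hγl, hγr] using congrArg (S.push (eqToHom h0)) hpull.symm

end IsExangulated

section InducedFunctor

variable {C : Type u} [Category.{v} C] [Preadditive C] [HasZeroObject C]
  [HasBinaryBiproducts C] (𝒳 : AddSubcat C) {F : C → C}

structure InducesQuotFunctor (R : ∀ {A B : C}, (A ⟶ B) → (F A ⟶ F B) → Prop) : Prop where
  exists_rel : ∀ {A B : C} (a : A ⟶ B), ∃ c, R a c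
  sub_mem : ∀ {A B : C} {a a' : A ⟶ B} {c c' : F A ⟶ F B}, R a c → R a' c' →
    a' - a ∈ homIdeal 𝒳 A B → c' - c ∈ homIdeal 𝒳 (F A) (F B)
  rel_id : ∀ A : C, R (𝟙 A) (𝟙 (F A))
  rel_comp : ∀ {A B D : C} {a : A ⟶ B} {b : B ⟶ D} {c : F A ⟶ F B} {d : F B ⟶ F D},
    R a c → R b d → R (a ≫ b) (c ≫ d)
  rel_add : ∀ {A B : C} {a a' : A ⟶ B} {c c' : F A ⟶ F B}, R a c → R a' c' →
    R (a + a') (c + c')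

namespace InducesQuotFunctor

variable {𝒳} {R : ∀ {A B : C}, (A ⟶ B) → (F A ⟶ F B) → Prop}

lemma mk_eq_mk (hR : InducesQuotFunctor 𝒳 R) {A B : C} {a a' : A ⟶ B} {c c' : F A ⟶ F B}
    (h : R a c) (h' : R a' c')
    (ha : (QuotientAddGroup.mk a : (A ⟶ B) ⧸ homIdeal 𝒳 A B) = QuotientAddGroup.mk a') :
    (QuotientAddGroup.mk c : (F A ⟶ F B) ⧸ homIdeal 𝒳 (F A) (F B)) = QuotientAddGroup.mk c' := by
  rw [QuotientAddGroup.eq, ← sub_eq_neg_add] at ha ⊢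
  exact hR.sub_mem h h' ha

variable (hR : InducesQuotFunctor 𝒳 R)

noncomputable def functor : QuotObj 𝒳 ⥤ QuotObj 𝒳 where
  obj X := ⟨F X.as⟩
  map {X Y} f := Quotient.liftOn f
    (fun a => (QuotientAddGroup.mk (hR.exists_rel a).choose :
      (F X.as ⟶ F Y.as) ⧸ homIdeal 𝒳 _ _))
    (fun _ _ haa' => hR.mk_eq_mk (hR.exists_rel _).choose_spec (hR.exists_rel _).choose_spec
      (Quotient.sound haa'))
  map_id X := hR.mk_eq_mk (hR.exists_rel _).choose_spec (hR.rel_id X.as) rfl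
  map_comp {X Y Z} f g := by
    induction f using Quotient.inductionOn with | _ a => ?_
    induction g using Quotient.inductionOn with | _ b => ?_
    exact hR.mk_eq_mk (hR.exists_rel _).choose_spec
      (hR.rel_comp (hR.exists_rel a).choose_spec (hR.exists_rel b).choose_spec) rfl

lemma functor_obj (A : C) :
    hR.functor.obj ((quotFunctor 𝒳).obj A) = (quotFunctor 𝒳).obj (F A) :=
  rfl

lemma functor_map_quotFunctor_map {A B : C} {a : A ⟶ B} {c : F A ⟶ F B} (h : R a c) :
    hR.functor.map ((quotFunctor 𝒳).map a) = (quotFunctor 𝒳).map c :=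
  hR.mk_eq_mk (hR.exists_rel a).choose_spec h rfl

lemma functor_additive : hR.functor.Additive where
  map_add {X Y f g} := by
    induction f using Quotient.inductionOn with | _ a => ?_
    induction g using Quotient.inductionOn with | _ b => ?_
    exact hR.mk_eq_mk (hR.exists_rel _).choose_spec
      (hR.rel_add (hR.exists_rel a).choose_spec (hR.exists_rel b).choose_spec) rfl

end InducesQuotFunctor

end InducedFunctor

section Cosyzygy

variable {n : ℕ} {C : Type u} [Category.{v} C] [Preadditive C] (S : ExData n C)
  (T : C → ExSeq C) (δT : ∀ A, S.Ext ((T A).obj (n + 1)) ((T A).obj 0)) (hT0 : ∀ A, (T A).obj 0 = A)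

def baseHom {A B : C} (a : A ⟶ B) : (T A).obj 0 ⟶ (T B).obj 0 :=
  eqToHom (hT0 A) ≫ a ≫ eqToHom (hT0 B).symm

/-- `(a, c)` is a morphism of `E`-extensions from `δT A` to `δT B`. -/
def IsExtHom {A B : C} (a : A ⟶ B) (c : (T A).obj (n + 1) ⟶ (T B).obj (n + 1)) : Prop :=
  S.push (baseHom T hT0 a) (δT A) = S.pull c (δT B)

variable {S T δT hT0}

lemma isExtHom_id (A : C) : IsExtHom S T δT hT0 (𝟙 A) (𝟙 _) := by
  simp [IsExtHom, baseHom]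

lemma IsExtHom.comp {A B D : C} {a : A ⟶ B} {b : B ⟶ D}
    {c : (T A).obj (n + 1) ⟶ (T B).obj (n + 1)} {d : (T B).obj (n + 1) ⟶ (T D).obj (n + 1)}
    (h : IsExtHom S T δT hT0 a c) (h' : IsExtHom S T δT hT0 b d) : IsExtHom S T δT hT0 (a ≫ b) (c ≫ d) := by
  have hab : baseHom T hT0 (a ≫ b) = baseHom T hT0 a ≫ baseHom T hT0 b := by simp [baseHom]
  rw [IsExtHom, hab, ← S.push_push, h, ← S.pull_push, h', S.pull_pull]

lemma IsExtHom.add (hl : S.E.Additive) (hr : ∀ X : Cᵒᵖ, (S.E.obj X).Additive) {A B : C}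
    {a a' : A ⟶ B} {c c' : (T A).obj (n + 1) ⟶ (T B).obj (n + 1)}
    (h : IsExtHom S T δT hT0 a c) (h' : IsExtHom S T δT hT0 a' c') :
    IsExtHom S T δT hT0 (a + a') (c + c') := by
  have hadd : baseHom T hT0 (a + a') = baseHom T hT0 a + baseHom T hT0 a' := by
    simp [baseHom]
  rw [IsExtHom, hadd, S.push_add_hom hr, S.pull_add_hom hl, h, h']

variable [HasZeroObject C] [HasBinaryBiproducts C] {𝒳 : AddSubcat C}

lemma push_eq_zero_of_mem (hS : IsExangulated S) (hTdist : ∀ A, S.Dist (T A) (δT A))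
    (hTapprox : ∀ A, XMonic 𝒳 (eqToHom (hT0 A).symm ≫ (T A).map 0)) {A M : C}
    (hM : 𝒳.mem M) (u : (T A).obj 0 ⟶ M) : S.push u (δT A) = 0 := by
  obtain ⟨k, hk⟩ := hTapprox A M hM (eqToHom (hT0 A).symm ≫ u)
  exact (hS.ex_con_last (T A) (δT A) (hTdist A) M u).mpr
    ⟨k, by simpa using congrArg (eqToHom (hT0 A) ≫ ·) hk⟩

lemma IsExtHom.sub_mem (hn : 0 < n) (hS : IsExangulated S)
    (hTdist : ∀ A, S.Dist (T A) (δT A)) (hTX : ∀ A, ∀ i, 1 ≤ i → i ≤ n → 𝒳.mem ((T A).obj i))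
    (hTapprox : ∀ A, XMonic 𝒳 (eqToHom (hT0 A).symm ≫ (T A).map 0)) {A B : C}
    {a a' : A ⟶ B} {c c' : (T A).obj (n + 1) ⟶ (T B).obj (n + 1)}
    (h : IsExtHom S T δT hT0 a c) (h' : IsExtHom S T δT hT0 a' c')
    (ha : a' - a ∈ homIdeal 𝒳 A B) :
    c' - c ∈ homIdeal 𝒳 ((T A).obj (n + 1)) ((T B).obj (n + 1)) := by
  obtain ⟨M, hM, g, k, hgk⟩ := ha
  have hsub : baseHom T hT0 a' - baseHom T hT0 a =
      (eqToHom (hT0 A) ≫ g) ≫ k ≫ eqToHom (hT0 B).symm := by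
    simp only [baseHom, ← Preadditive.comp_sub, ← Preadditive.sub_comp, ← hgk, Category.assoc]
  have hz : S.pull (c' - c) (δT B) = 0 := by
    rw [S.pull_sub_hom hS.additive_left, ← h, ← h', ← S.push_sub_hom hS.additive_right, hsub,
      ← S.push_push, push_eq_zero_of_mem (hT0 := hT0) hS hTdist hTapprox hM, S.push_zero]
  obtain ⟨p, hp⟩ := (hS.ex_cov_last (T B) (δT B) (hTdist B) _ (c' - c)).mp hz
  exact ⟨(T B).obj n, hTX B n hn le_rfl, p, (T B).map n, hp⟩

lemma exists_isExtHom (hn : 0 < n) (hS : IsExangulated S)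
    (hTdist : ∀ A, S.Dist (T A) (δT A)) (hTX : ∀ A, ∀ i, 1 ≤ i → i ≤ n → 𝒳.mem ((T A).obj i))
    (hTapprox : ∀ A, XMonic 𝒳 (eqToHom (hT0 A).symm ≫ (T A).map 0)) {A B : C} (a : A ⟶ B) :
    ∃ c, IsExtHom S T δT hT0 a c := by
  have hσ : S.push ((T B).map 0) (S.push (baseHom T hT0 a) (δT A)) = 0 := by
    rw [S.push_push]
    exact push_eq_zero_of_mem (hT0 := hT0) hS hTdist hTapprox (hTX B 1 le_rfl hn) _
  obtain ⟨c, hc⟩ := hS.exists_pull_eq_of_push_eq_zero hn (hTdist B) _ hσ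
  exact ⟨c, hc.symm⟩

lemma inducesQuotFunctor_isExtHom (hn : 0 < n) (hS : IsExangulated S)
    (hTdist : ∀ A, S.Dist (T A) (δT A)) (hTX : ∀ A, ∀ i, 1 ≤ i → i ≤ n → 𝒳.mem ((T A).obj i))
    (hTapprox : ∀ A, XMonic 𝒳 (eqToHom (hT0 A).symm ≫ (T A).map 0)) :
    InducesQuotFunctor 𝒳 (F := fun A => (T A).obj (n + 1)) (IsExtHom S T δT hT0) where
  exists_rel := exists_isExtHom hn hS hTdist hTX hTapprox
  sub_mem := fun h h' => IsExtHom.sub_mem hn hS hTdist hTX hTapprox h h'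
  rel_id := isExtHom_id
  rel_comp := IsExtHom.comp
  rel_add := IsExtHom.add hS.additive_left hS.additive_right

end Cosyzygy

/-- Given, for every object `A`, a chosen distinguished
`n`-exangle `A → X₁ᴬ → ⋯ → Xₙᴬ → GA ⇢` whose first morphism is a left
`𝒳`-approximation and with `X₁ᴬ, …, Xₙᴬ ∈ 𝒳`, there is a well-defined additive
endofunctor `G` of `C/𝒳` sending `A` to `GA` and `ā` to `φ̄_{n+1}` for any lift
`(a, φ₁, …, φ_{n+1})` of `a` to a morphism of the chosen distinguished
`n`-exangles; in particular the value does not depend on the lift nor on the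
representative of `ā`. -/
theorem exists_wellDefined_cosyzygy_functor
    {n : ℕ} (hn : 0 < n) {C : Type u} [Category.{v} C] [Preadditive C]
    [HasZeroObject C] [HasBinaryBiproducts C]
    (S : ExData n C) (hS : IsExangulated S)
    (𝒳 : AddSubcat C)
    (T : C → ExSeq C) (δT : ∀ A, S.Ext ((T A).obj (n + 1)) ((T A).obj 0))
    (hTdist : ∀ A, S.Dist (T A) (δT A))
    (hT0 : ∀ A, (T A).obj 0 = A)
    (hTX : ∀ A, ∀ i, 1 ≤ i → i ≤ n → 𝒳.mem ((T A).obj i))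
    (hTapprox : ∀ A, XMonic 𝒳 (eqToHom (hT0 A).symm ≫ (T A).map 0)) :
    ∃ G : QuotObj 𝒳 ⥤ QuotObj 𝒳, G.Additive ∧
      ∃ hGobj : ∀ A : C, G.obj ((quotFunctor 𝒳).obj A) =
          (quotFunctor 𝒳).obj ((T A).obj (n + 1)),
        ∀ (A B : C) (a : A ⟶ B) (φ : ExSeqHom n (T A) (T B)),
          φ.hom 0 = eqToHom (hT0 A) ≫ a ≫ eqToHom (hT0 B).symm →
          S.push (φ.hom 0) (δT A) = S.pull (φ.hom (n + 1)) (δT B) →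
          G.map ((quotFunctor 𝒳).map a) =
            eqToHom (hGobj A) ≫ (quotFunctor 𝒳).map (φ.hom (n + 1)) ≫
              eqToHom (hGobj B).symm := by
  have hR := inducesQuotFunctor_isExtHom (hT0 := hT0) hn hS hTdist hTX hTapprox
  refine ⟨hR.functor, hR.functor_additive, hR.functor_obj, fun A B a φ hφ0 hφ => ?_⟩
  have hac : IsExtHom S T δT hT0 a (φ.hom (n + 1)) := by rwa [IsExtHom, baseHom, ← hφ0]
  rw [hR.functor_map_quotFunctor_map hac]
  erw [eqToHom_refl, eqToHom_refl, Category.id_comp, Category.comp_id]
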